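/- arXiv:2108.10573 — 6 statements merged into one kernel-verified Lean document; each statement's English description precedes it below -/
import Mathlib

section
/- Let S₁, S₂ ⊆ Fin n be disjoint with S₂ nonempty, let r₁, r₂, a₁, a₂, b ∈ ℝ and ε₁ ≥ 0. Let h₁ be a real-valued function on the hypercube {-1,1}^n that depends only on the coordinates in S₁, satisfies E[h₁·χ_{S₁}] = 0, and satisfies |h₁(x)| ≤ |r₁|·ε₁ for all x. Define f_v(x) = b + (a₁·(r₁·χ_{S₁}(x) + h₁(x)) + a₂·r₂·χ_{S₂}(x))². Then f_v(x) = r·χ_{S₁ ∪ S₂}(x) + h(x) where r = 2·r₁·r₂·a₁·a₂, the function h satisfies E[h·χ_{S₁ ∪ S₂}] = 0, and for every x, |h(x)| ≤ |b + (r₁·a₁)² + (r₂·a₂)²| + 2·ε₁·|r₁·a₁|·(|r₁·a₁|·(1 + ε₁) + |r₂·a₂|). -/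
/-- The Walsh monomial `χ_S(x) = ∏_{i ∈ S} x i`. -/
noncomputable def walsh {n : ℕ} (S : Finset (Fin n)) (x : Fin n → ℝ) : ℝ :=
  ∏ i ∈ S, x i

/-- Expectation over the uniform distribution on the hypercube `{-1,1}^n`. -/
noncomputable def hypE {n : ℕ} (F : (Fin n → ℝ) → ℝ) : ℝ :=
  (2 ^ n : ℝ)⁻¹ * ∑ σ : Fin n → Bool, F (fun i => if σ i then 1 else -1)

/-!
Square the neuron's input and use `χ_{S₁}² = χ_{S₂}² = 1`: the cross term
`2 r₁ r₂ a₁ a₂ χ_{S₁}χ_{S₂}` is the target monomial, and the residual times `χ_{S₁ ∪ S₂}` is a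
function of the `S₁`-coordinates times `χ_{S₂}`, plus a multiple of `h₁ χ_{S₁}`. The former is uncorrelated with `χ_{S₂}` because flipping a coordinate
of `S₂` (which avoids `S₁`) changes its sign, the latter by assumption; the pointwise bound is the
triangle inequality with `|a₁ h₁| ≤ |r₁ a₁| ε₁`.
-/

open Finset

section

variable {n : ℕ}

def IsCubePoint (x : Fin n → ℝ) : Prop :=
  ∀ i, x i = 1 ∨ x i = -1

def DependsOnlyOn (S : Finset (Fin n)) (g : (Fin n → ℝ) → ℝ) : Prop :=
  ∀ x y, IsCubePoint x → IsCubePoint y → (∀ i ∈ S, x i = y i) → g x = g y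

lemma DependsOnlyOn.mono {S T : Finset (Fin n)} {g : (Fin n → ℝ) → ℝ} (hST : S ⊆ T)
    (hg : DependsOnlyOn S g) : DependsOnlyOn T g :=
  fun x y hx hy hxy => hg x y hx hy fun i hi => hxy i (hST hi)

lemma walsh_congr {S : Finset (Fin n)} {x y : Fin n → ℝ} (h : ∀ i ∈ S, x i = y i) :
    walsh S x = walsh S y :=
  prod_congr rfl h

lemma walsh_union {S T : Finset (Fin n)} (h : Disjoint S T) (x : Fin n → ℝ) :
    walsh (S ∪ T) x = walsh S x * walsh T x :=
  prod_union h

lemma abs_walsh {x : Fin n → ℝ} (hx : IsCubePoint x) (S : Finset (Fin n)) :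
    |walsh S x| = 1 := by
  rw [walsh, abs_prod]
  exact prod_eq_one fun i _ => by rcases hx i with h | h <;> simp [h]

lemma walsh_sq {x : Fin n → ℝ} (hx : IsCubePoint x) (S : Finset (Fin n)) :
    walsh S x ^ 2 = 1 := by
  rw [← sq_abs, abs_walsh hx, one_pow]

lemma walsh_update_neg {S : Finset (Fin n)} {j : Fin n} (hj : j ∈ S) (x : Fin n → ℝ) :
    walsh S (Function.update x j (-x j)) = -walsh S x := by
  classical
  rw [walsh, walsh, prod_update_of_mem hj, ← mul_prod_erase S x hj, sdiff_singleton_eq_erase,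
    neg_mul]

def signVec (σ : Fin n → Bool) : Fin n → ℝ :=
  fun i => if σ i then 1 else -1

lemma isCubePoint_signVec (σ : Fin n → Bool) : IsCubePoint (signVec σ) := by
  intro i; unfold signVec; split_ifs <;> simp

lemma signVec_update_not (σ : Fin n → Bool) (j : Fin n) :
    signVec (Function.update σ j (!σ j)) = Function.update (signVec σ) j (-signVec σ j) := by
  ext i
  rcases eq_or_ne i j with rfl | hi
  · cases h : σ i <;> simp [signVec, h]
  · simp [signVec, hi]

lemma hypE_eq_sum (F : (Fin n → ℝ) → ℝ) :
    hypE F = (2 ^ n : ℝ)⁻¹ * ∑ σ, F (signVec σ) :=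
  rfl

lemma hypE_congr {F G : (Fin n → ℝ) → ℝ} (h : ∀ x, IsCubePoint x → F x = G x) :
    hypE F = hypE G := by
  simp only [hypE_eq_sum, fun σ => h _ (isCubePoint_signVec σ)]

lemma hypE_add (F G : (Fin n → ℝ) → ℝ) :
    hypE (fun x => F x + G x) = hypE F + hypE G := by
  simp only [hypE_eq_sum, sum_add_distrib, mul_add]

lemma hypE_const_mul (c : ℝ) (F : (Fin n → ℝ) → ℝ) :
    hypE (fun x => c * F x) = c * hypE F := by
  simp only [hypE_eq_sum, ← mul_sum]; ring

lemma hypE_mul_walsh_eq_zero {S : Finset (Fin n)} {j : Fin n} (hj : j ∈ S)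
    {g : (Fin n → ℝ) → ℝ} (hg : DependsOnlyOn (univ.erase j) g) :
    hypE (fun x => g x * walsh S x) = 0 := by
  let F : (Fin n → Bool) → ℝ := fun σ => g (signVec σ) * walsh S (signVec σ)
  let flip : Equiv.Perm (Fin n → Bool) :=
    Function.Involutive.toPerm (fun σ => Function.update σ j (!σ j)) fun σ => by simp
  have hflip : ∀ σ, F (Function.update σ j (!σ j)) = -F σ := by
    intro σ
    have hagree : ∀ i ∈ univ.erase j, signVec (Function.update σ j (!σ j)) i = signVec σ i :=
      fun i hi => by rw [signVec_update_not, Function.update_of_ne (ne_of_mem_erase hi)]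
    simp only [F, hg _ _ (isCubePoint_signVec _) (isCubePoint_signVec σ) hagree]
    rw [signVec_update_not, walsh_update_neg hj, mul_neg]
  have hsum : ∑ σ, F σ = -∑ σ, F σ :=
    calc ∑ σ, F σ = ∑ σ, F (flip σ) := (Equiv.sum_comp flip F).symm
      _ = ∑ σ, -F σ := sum_congr rfl fun σ _ => hflip σ
      _ = -∑ σ, F σ := sum_neg_distrib _
  rw [hypE_eq_sum, show ∑ σ, F σ = 0 by linarith, mul_zero]

lemma hypE_mul_walsh_eq_zero_of_disjoint {S₁ S₂ : Finset (Fin n)} (hdisj : Disjoint S₁ S₂)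
    (hne : S₂.Nonempty) {g : (Fin n → ℝ) → ℝ} (hg : DependsOnlyOn S₁ g) :
    hypE (fun x => g x * walsh S₂ x) = 0 := by
  obtain ⟨j, hj⟩ := hne
  refine hypE_mul_walsh_eq_zero hj (hg.mono fun i hi => mem_erase.2 ⟨?_, mem_univ i⟩)
  rintro rfl
  exact disjoint_left.1 hdisj hi hj

lemma neuron_residual_eq {b a₁ a₂ r₁ r₂ c₁ c₂ e : ℝ} (hc₁ : c₁ ^ 2 = 1) (hc₂ : c₂ ^ 2 = 1) :
    b + (a₁ * (r₁ * c₁ + e) + a₂ * r₂ * c₂) ^ 2 - 2 * r₁ * r₂ * a₁ * a₂ * (c₁ * c₂)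
      = (b + (r₁ * a₁) ^ 2 + (r₂ * a₂) ^ 2) + (a₁ * e) ^ 2 + 2 * (r₁ * a₁ * c₁) * (a₁ * e)
        + 2 * (r₂ * a₂ * c₂) * (a₁ * e) := by
  linear_combination (r₁ * a₁) ^ 2 * hc₁ + (r₂ * a₂) ^ 2 * hc₂

lemma abs_neuron_residual_le {C u v c₁ c₂ s ε : ℝ} (hc₁ : |c₁| = 1) (hc₂ : |c₂| = 1)
    (hs : |s| ≤ |u| * ε) :
    |C + s ^ 2 + 2 * (u * c₁) * s + 2 * (v * c₂) * s|
      ≤ |C| + 2 * ε * |u| * (|u| * (1 + ε) + |v|) := by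
  have hs₀ : 0 ≤ |s| := abs_nonneg s
  calc |C + s ^ 2 + 2 * (u * c₁) * s + 2 * (v * c₂) * s|
      ≤ |C| + |s ^ 2| + |2 * (u * c₁) * s| + |2 * (v * c₂) * s| :=
      (abs_add_le _ _).trans <| add_le_add_left
        ((abs_add_le _ _).trans <| add_le_add_left (abs_add_le _ _) _) _
    _ = |C| + |s| ^ 2 + 2 * |u| * |s| + 2 * |v| * |s| := by
      simp only [abs_pow, abs_mul, hc₁, hc₂, abs_two, mul_one]
    _ ≤ |C| + 2 * ε * |u| * (|u| * (1 + ε) + |v|) := by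
      nlinarith [mul_le_mul_of_nonneg_left hs (abs_nonneg u),
        mul_le_mul_of_nonneg_left hs (abs_nonneg v), mul_le_mul hs hs hs₀ (hs₀.trans hs)]

end

theorem neuron_computes_product_monomial_general (n : ℕ) (S₁ S₂ : Finset (Fin n))
    (hdisj : Disjoint S₁ S₂) (hne : S₂.Nonempty)
    (r₁ r₂ a₁ a₂ b ε₁ : ℝ)
    (h₁ : (Fin n → ℝ) → ℝ)
    (hdep : ∀ x y : Fin n → ℝ, (∀ i, x i = 1 ∨ x i = -1) → (∀ i, y i = 1 ∨ y i = -1) →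
      (∀ i ∈ S₁, x i = y i) → h₁ x = h₁ y)
    (hmean : hypE (fun x => h₁ x * walsh S₁ x) = 0)
    (hbd : ∀ x : Fin n → ℝ, (∀ i, x i = 1 ∨ x i = -1) → |h₁ x| ≤ |r₁| * ε₁) :
    hypE (fun x =>
        ((b + (a₁ * (r₁ * walsh S₁ x + h₁ x) + a₂ * r₂ * walsh S₂ x) ^ 2)
            - (2 * r₁ * r₂ * a₁ * a₂) * walsh (S₁ ∪ S₂) x) * walsh (S₁ ∪ S₂) x) = 0 ∧
    ∀ x : Fin n → ℝ, (∀ i, x i = 1 ∨ x i = -1) →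
      |(b + (a₁ * (r₁ * walsh S₁ x + h₁ x) + a₂ * r₂ * walsh S₂ x) ^ 2)
          - (2 * r₁ * r₂ * a₁ * a₂) * walsh (S₁ ∪ S₂) x|
        ≤ |b + (r₁ * a₁) ^ 2 + (r₂ * a₂) ^ 2|
          + 2 * ε₁ * |r₁ * a₁| * (|r₁ * a₁| * (1 + ε₁) + |r₂ * a₂|) := by
  set C := b + (r₁ * a₁) ^ 2 + (r₂ * a₂) ^ 2
  have hresidual : ∀ x, IsCubePoint x →
      (b + (a₁ * (r₁ * walsh S₁ x + h₁ x) + a₂ * r₂ * walsh S₂ x) ^ 2)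
          - (2 * r₁ * r₂ * a₁ * a₂) * walsh (S₁ ∪ S₂) x
        = C + (a₁ * h₁ x) ^ 2 + 2 * (r₁ * a₁ * walsh S₁ x) * (a₁ * h₁ x)
          + 2 * (r₂ * a₂ * walsh S₂ x) * (a₁ * h₁ x) := fun x hx => by
    rw [walsh_union hdisj]
    exact neuron_residual_eq (walsh_sq hx S₁) (walsh_sq hx S₂)
  refine ⟨?_, fun x hx => ?_⟩
  · set G : (Fin n → ℝ) → ℝ :=
      fun x => (C + (a₁ * h₁ x) ^ 2) * walsh S₁ x + 2 * (r₁ * a₁) * (a₁ * h₁ x)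
    have hG : DependsOnlyOn S₁ G := fun x y hx hy hxy => by
      simp only [G, hdep x y hx hy hxy, walsh_congr hxy]
    rw [hypE_congr (G := fun x => G x * walsh S₂ x + 2 * r₂ * a₂ * a₁ * (h₁ x * walsh S₁ x))
        fun x hx => ?_, hypE_add, hypE_const_mul,
      hypE_mul_walsh_eq_zero_of_disjoint hdisj hne hG, hmean, mul_zero, add_zero]
    rw [hresidual x hx, walsh_union hdisj]
    linear_combination (2 * r₁ * a₁ * (a₁ * h₁ x) * walsh S₂ x) * walsh_sq hx S₁
      + (2 * r₂ * a₂ * a₁ * h₁ x * walsh S₁ x) * walsh_sq hx S₂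
  · have hs : |a₁ * h₁ x| ≤ |r₁ * a₁| * ε₁ :=
      calc |a₁ * h₁ x| = |a₁| * |h₁ x| := abs_mul _ _
        _ ≤ |a₁| * (|r₁| * ε₁) := mul_le_mul_of_nonneg_left (hbd x hx) (abs_nonneg a₁)
        _ = |r₁ * a₁| * ε₁ := by rw [abs_mul]; ring
    rw [hresidual x hx]
    exact abs_neuron_residual_le (abs_walsh hx S₁) (abs_walsh hx S₂) hs

/-- A quadratic neuron with inputs `r₁·χ_{S₁} + h₁` and `r₂·χ_{S₂}` computes the product
monomial `χ_{S₁ ∪ S₂}` with scaling `2·r₁·r₂·a₁·a₂` up to a noise term `h` that is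
uncorrelated with `χ_{S₁ ∪ S₂}` and pointwise bounded. -/
theorem neuron_computes_product_monomial (n : ℕ) (S₁ S₂ : Finset (Fin n))
    (hdisj : Disjoint S₁ S₂) (hne : S₂.Nonempty)
    (r₁ r₂ a₁ a₂ b ε₁ : ℝ) (hε₁ : 0 ≤ ε₁)
    (h₁ : (Fin n → ℝ) → ℝ)
    (hdep : ∀ x y : Fin n → ℝ, (∀ i, x i = 1 ∨ x i = -1) → (∀ i, y i = 1 ∨ y i = -1) →
      (∀ i ∈ S₁, x i = y i) → h₁ x = h₁ y)
    (hmean : hypE (fun x => h₁ x * walsh S₁ x) = 0)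
    (hbd : ∀ x : Fin n → ℝ, (∀ i, x i = 1 ∨ x i = -1) → |h₁ x| ≤ |r₁| * ε₁) :
    hypE (fun x =>
        ((b + (a₁ * (r₁ * walsh S₁ x + h₁ x) + a₂ * r₂ * walsh S₂ x) ^ 2)
            - (2 * r₁ * r₂ * a₁ * a₂) * walsh (S₁ ∪ S₂) x) * walsh (S₁ ∪ S₂) x) = 0 ∧
    ∀ x : Fin n → ℝ, (∀ i, x i = 1 ∨ x i = -1) →
      |(b + (a₁ * (r₁ * walsh S₁ x + h₁ x) + a₂ * r₂ * walsh S₂ x) ^ 2)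
          - (2 * r₁ * r₂ * a₁ * a₂) * walsh (S₁ ∪ S₂) x|
        ≤ |b + (r₁ * a₁) ^ 2 + (r₂ * a₂) ^ 2|
          + 2 * ε₁ * |r₁ * a₁| * (|r₁ * a₁| * (1 + ε₁) + |r₂ * a₂|) :=
  neuron_computes_product_monomial_general n S₁ S₂ hdisj hne r₁ r₂ a₁ a₂ b ε₁ h₁ hdep hmean hbd
end

section
/- Let r₁, r₂, z_S, z₀, a₁, a₂, b ∈ ℝ, γ₁, γ₂ > 0, ε_stat ≥ 0, U ≥ 0. Assume the approximate stationarity conditions: (i) |(r₁·a₁)² + (r₂·a₂)² + b + z₀| ≤ ε_stat; (ii) |(2·r₁·r₂·a₁·a₂ + z_S)·(2·r₁·r₂·a₂) + ((r₁·a₁)² + (r₂·a₂)² + b + z₀)·(2·r₁²·a₁) + γ₁·a₁| ≤ ε_stat; (iii) |(2·r₁·r₂·a₁·a₂ + z_S)·(2·r₁·r₂·a₁) + ((r₁·a₁)² + (r₂·a₂)² + b + z₀)·(2·r₂²·a₂) + γ₂·a₂| ≤ ε_stat; and (iv) |a₁| ≤ U and |a₂| ≤ U. Set ρ = (2·r₁·r₂·a₁·a₂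 + z_S)·(2·r₁·r₂) and ε' = (1 + 2·max(r₁², r₂²)·U)·ε_stat. Then |ρ·a₂ + γ₁·a₁| ≤ ε', |ρ·a₁ + γ₂·a₂| ≤ ε', |γ₁·γ₂ − ρ²|·|a₁| ≤ (γ₂ + |ρ|)·ε', and |γ₁·γ₂ − ρ²|·|a₂| ≤ (γ₁ + |ρ|)·ε'. -/
/-!
Write `D` for the `b`-derivative and `ρ = (2 r₁ r₂ a₁ a₂ + z_S) · 2 r₁ r₂`. The `aᵢ`-derivative is
`ρ a_j + γᵢ aᵢ + D · 2 rᵢ² aᵢ`, and `|D| ≤ ε_stat` makes the last term at most `2 max(r₁², r₂²) U ε_stat`,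
so both `ρ a_j + γᵢ aᵢ` are small. Eliminating between these two linear forms in `(a₁, a₂)`
(Cramer's rule for the matrix `[[γ₁, ρ], [ρ, γ₂]]`) bounds `|det| · |aᵢ|`.
-/

section
variable {α : Type*} [CommRing α] [LinearOrder α] [IsStrictOrderedRing α]

theorem abs_le_of_abs_add_mul_le {x d c ε K : α} (h : |x + d * c| ≤ ε) (hd : |d| ≤ ε)
    (hc : |c| ≤ K) : |x| ≤ (1 + K) * ε := by
  have hdc : |d * c| ≤ ε * K := by
    rw [abs_mul]
    exact mul_le_mul hd hc (abs_nonneg c) ((abs_nonneg d).trans hd)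
  calc |x| = |(x + d * c) - d * c| := by rw [add_sub_cancel_right]
    _ ≤ |x + d * c| + |d * c| := abs_sub _ _
    _ ≤ ε + ε * K := add_le_add h hdc
    _ = (1 + K) * ε := by ring

theorem abs_two_mul_sq_mul_le {r a M U : α} (hr : r ^ 2 ≤ M) (ha : |a| ≤ U) :
    |2 * r ^ 2 * a| ≤ 2 * M * U := by
  rw [abs_mul, abs_mul, abs_two, abs_sq]
  have hM : 0 ≤ M := (sq_nonneg r).trans hr
  gcongr

theorem abs_det_mul_abs_le {γ₁ γ₂ ρ a₁ a₂ ε : α} (hγ₂ : 0 ≤ γ₂)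
    (h₁ : |ρ * a₂ + γ₁ * a₁| ≤ ε) (h₂ : |ρ * a₁ + γ₂ * a₂| ≤ ε) :
    |γ₁ * γ₂ - ρ ^ 2| * |a₁| ≤ (γ₂ + |ρ|) * ε := by
  have elim : (γ₁ * γ₂ - ρ ^ 2) * a₁ = γ₂ * (ρ * a₂ + γ₁ * a₁) - ρ * (ρ * a₁ + γ₂ * a₂) := by
    ring
  calc |γ₁ * γ₂ - ρ ^ 2| * |a₁| = |γ₂ * (ρ * a₂ + γ₁ * a₁) - ρ * (ρ * a₁ + γ₂ * a₂)| := by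
        rw [← abs_mul, elim]
    _ ≤ |γ₂ * (ρ * a₂ + γ₁ * a₁)| + |ρ * (ρ * a₁ + γ₂ * a₂)| := abs_sub _ _
    _ = γ₂ * |ρ * a₂ + γ₁ * a₁| + |ρ| * |ρ * a₁ + γ₂ * a₂| := by
        rw [abs_mul, abs_mul, abs_of_nonneg hγ₂]
    _ ≤ γ₂ * ε + |ρ| * ε := by gcongr
    _ = (γ₂ + |ρ|) * ε := by ring

end

theorem stationarity_first_order_conditions_general
    (r₁ r₂ zS z₀ a₁ a₂ b γ₁ γ₂ εstat U : ℝ)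
    (hγ₁ : 0 < γ₁) (hγ₂ : 0 < γ₂)
    (h1 : |(r₁ * a₁) ^ 2 + (r₂ * a₂) ^ 2 + b + z₀| ≤ εstat)
    (h2 : |(2 * r₁ * r₂ * a₁ * a₂ + zS) * (2 * r₁ * r₂ * a₂)
        + ((r₁ * a₁) ^ 2 + (r₂ * a₂) ^ 2 + b + z₀) * (2 * r₁ ^ 2 * a₁)
        + γ₁ * a₁| ≤ εstat)
    (h3 : |(2 * r₁ * r₂ * a₁ * a₂ + zS) * (2 * r₁ * r₂ * a₁)
        + ((r₁ * a₁) ^ 2 + (r₂ * a₂) ^ 2 + b + z₀) * (2 * r₂ ^ 2 * a₂)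
        + γ₂ * a₂| ≤ εstat)
    (h4 : |a₁| ≤ U) (h5 : |a₂| ≤ U) :
    |(2 * r₁ * r₂ * a₁ * a₂ + zS) * (2 * r₁ * r₂) * a₂ + γ₁ * a₁|
        ≤ (1 + 2 * max (r₁ ^ 2) (r₂ ^ 2) * U) * εstat ∧
    |(2 * r₁ * r₂ * a₁ * a₂ + zS) * (2 * r₁ * r₂) * a₁ + γ₂ * a₂|
        ≤ (1 + 2 * max (r₁ ^ 2) (r₂ ^ 2) * U) * εstat ∧
    |γ₁ * γ₂ - ((2 * r₁ * r₂ * a₁ * a₂ + zS) * (2 * r₁ * r₂)) ^ 2| * |a₁|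
        ≤ (γ₂ + |(2 * r₁ * r₂ * a₁ * a₂ + zS) * (2 * r₁ * r₂)|)
          * ((1 + 2 * max (r₁ ^ 2) (r₂ ^ 2) * U) * εstat) ∧
    |γ₁ * γ₂ - ((2 * r₁ * r₂ * a₁ * a₂ + zS) * (2 * r₁ * r₂)) ^ 2| * |a₂|
        ≤ (γ₁ + |(2 * r₁ * r₂ * a₁ * a₂ + zS) * (2 * r₁ * r₂)|)
          * ((1 + 2 * max (r₁ ^ 2) (r₂ ^ 2) * U) * εstat) := by
  have e₁ : |(2 * r₁ * r₂ * a₁ * a₂ + zS) * (2 * r₁ * r₂) * a₂ + γ₁ * a₁|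
      ≤ (1 + 2 * max (r₁ ^ 2) (r₂ ^ 2) * U) * εstat :=
    abs_le_of_abs_add_mul_le ((congrArg abs (by ring)).trans_le h2) h1
      (abs_two_mul_sq_mul_le (le_max_left _ _) h4)
  have e₂ : |(2 * r₁ * r₂ * a₁ * a₂ + zS) * (2 * r₁ * r₂) * a₁ + γ₂ * a₂|
      ≤ (1 + 2 * max (r₁ ^ 2) (r₂ ^ 2) * U) * εstat :=
    abs_le_of_abs_add_mul_le ((congrArg abs (by ring)).trans_le h3) h1
      (abs_two_mul_sq_mul_le (le_max_right _ _) h5)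
  refine ⟨e₁, e₂, abs_det_mul_abs_le hγ₂.le e₁ e₂, ?_⟩
  simpa only [mul_comm γ₂ γ₁] using abs_det_mul_abs_le hγ₁.le e₂ e₁

/-- First-order consequences of approximate stationarity of the regularized idealized loss
for a neuron with two active inputs. -/
theorem stationarity_first_order_conditions
    (r₁ r₂ zS z₀ a₁ a₂ b γ₁ γ₂ εstat U : ℝ)
    (hγ₁ : 0 < γ₁) (hγ₂ : 0 < γ₂) (hε : 0 ≤ εstat) (hU : 0 ≤ U)
    (h1 : |(r₁ * a₁) ^ 2 + (r₂ * a₂) ^ 2 + b + z₀| ≤ εstat)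
    (h2 : |(2 * r₁ * r₂ * a₁ * a₂ + zS) * (2 * r₁ * r₂ * a₂)
        + ((r₁ * a₁) ^ 2 + (r₂ * a₂) ^ 2 + b + z₀) * (2 * r₁ ^ 2 * a₁)
        + γ₁ * a₁| ≤ εstat)
    (h3 : |(2 * r₁ * r₂ * a₁ * a₂ + zS) * (2 * r₁ * r₂ * a₁)
        + ((r₁ * a₁) ^ 2 + (r₂ * a₂) ^ 2 + b + z₀) * (2 * r₂ ^ 2 * a₂)
        + γ₂ * a₂| ≤ εstat)
    (h4 : |a₁| ≤ U) (h5 : |a₂| ≤ U) :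
    |(2 * r₁ * r₂ * a₁ * a₂ + zS) * (2 * r₁ * r₂) * a₂ + γ₁ * a₁|
        ≤ (1 + 2 * max (r₁ ^ 2) (r₂ ^ 2) * U) * εstat ∧
    |(2 * r₁ * r₂ * a₁ * a₂ + zS) * (2 * r₁ * r₂) * a₁ + γ₂ * a₂|
        ≤ (1 + 2 * max (r₁ ^ 2) (r₂ ^ 2) * U) * εstat ∧
    |γ₁ * γ₂ - ((2 * r₁ * r₂ * a₁ * a₂ + zS) * (2 * r₁ * r₂)) ^ 2| * |a₁|
        ≤ (γ₂ + |(2 * r₁ * r₂ * a₁ * a₂ + zS) * (2 * r₁ * r₂)|)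
          * ((1 + 2 * max (r₁ ^ 2) (r₂ ^ 2) * U) * εstat) ∧
    |γ₁ * γ₂ - ((2 * r₁ * r₂ * a₁ * a₂ + zS) * (2 * r₁ * r₂)) ^ 2| * |a₂|
        ≤ (γ₁ + |(2 * r₁ * r₂ * a₁ * a₂ + zS) * (2 * r₁ * r₂)|)
          * ((1 + 2 * max (r₁ ^ 2) (r₂ ^ 2) * U) * εstat) :=
  stationarity_first_order_conditions_general r₁ r₂ zS z₀ a₁ a₂ b γ₁ γ₂ εstat U hγ₁ hγ₂ h1 h2 h3 h4
    h5
end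

section
/- Let r, z₀, a, b ∈ ℝ, γ > 0, ε ≥ 0, and suppose 4·r²·ε < γ. Assume |(r·a)² + b + z₀| ≤ ε and |((r·a)² + b + z₀)·(2·r²·a) + γ·a| ≤ ε. Then |a| ≤ 2·ε/γ and |b| ≤ |z₀| + ε + r²·(2·ε/γ)². -/
/-!
The residual `u = (r a)² + b + z₀` is at most `ε` in size, so in the second stationarity
condition the term `u · 2r²a` is a perturbation of size at most `2r²ε|a| < γ|a|/2` of the
regularization term `γ a`; hence `γ|a|/2 ≤ ε`. The bias is then read off the residual:
`b = u - z₀ - (r a)²`.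
-/

lemma mul_abs_le_two_mul_of_abs_mul_add_le {u k a γ δ ε : ℝ} (hk : 0 ≤ k) (hu : |u| ≤ δ)
    (hγ : 2 * k * δ ≤ γ) (h : |u * (k * a) + γ * a| ≤ ε) : γ * |a| ≤ 2 * ε := by
  have hperturb : |u * (k * a)| ≤ k * δ * |a| := by
    rw [abs_mul, abs_mul, abs_of_nonneg hk]
    calc |u| * (k * |a|) ≤ δ * (k * |a|) := mul_le_mul_of_nonneg_right hu (by positivity)
      _ = k * δ * |a| := by ring
  have hreg : γ * |a| ≤ ε + k * δ * |a| :=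
    calc γ * |a| ≤ |γ * a| := by rw [abs_mul]; gcongr; exact le_abs_self γ
      _ = |(u * (k * a) + γ * a) - u * (k * a)| := by ring_nf
      _ ≤ |u * (k * a) + γ * a| + |u * (k * a)| := abs_sub _ _
      _ ≤ ε + k * δ * |a| := add_le_add h hperturb
  have hhalf : 2 * (k * δ * |a|) ≤ γ * |a| := by
    rw [← mul_assoc, ← mul_assoc]
    exact mul_le_mul_of_nonneg_right hγ (abs_nonneg a)
  linarith

lemma abs_le_of_abs_sq_add_add_le {s b z ε : ℝ} (h : |s ^ 2 + b + z| ≤ ε) :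
    |b| ≤ |z| + ε + s ^ 2 :=
  calc |b| = |(s ^ 2 + b + z) - z - s ^ 2| := by ring_nf
    _ ≤ |s ^ 2 + b + z| + |z| + |s ^ 2| := (abs_sub _ _).trans (add_le_add_left (abs_sub _ _) _)
    _ ≤ |z| + ε + s ^ 2 := by rw [abs_of_nonneg (sq_nonneg s)]; linarith

theorem single_active_input_stays_blank_general (r z₀ a b γ ε : ℝ)
    (hγ : 0 < γ) (hsmall : 4 * r ^ 2 * ε < γ)
    (h1 : |(r * a) ^ 2 + b + z₀| ≤ ε)
    (h2 : |((r * a) ^ 2 + b + z₀) * (2 * r ^ 2 * a) + γ * a| ≤ ε) :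
    |a| ≤ 2 * ε / γ ∧ |b| ≤ |z₀| + ε + r ^ 2 * (2 * ε / γ) ^ 2 := by
  have ha : |a| ≤ 2 * ε / γ := by
    rw [le_div_iff₀ hγ, mul_comm]
    exact mul_abs_le_two_mul_of_abs_mul_add_le (by positivity) h1 (by linarith) h2
  refine ⟨ha, ?_⟩
  have hsq : (r * a) ^ 2 ≤ r ^ 2 * (2 * ε / γ) ^ 2 := by
    rw [mul_pow, ← sq_abs a]
    gcongr
  linarith [abs_le_of_abs_sq_add_add_le h1]

/-- Approximate stationarity of the regularized idealized loss for a neuron with a single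
active input forces both the weight and the bias to be small. -/
theorem single_active_input_stays_blank (r z₀ a b γ ε : ℝ)
    (hγ : 0 < γ) (hε : 0 ≤ ε) (hsmall : 4 * r ^ 2 * ε < γ)
    (h1 : |(r * a) ^ 2 + b + z₀| ≤ ε)
    (h2 : |((r * a) ^ 2 + b + z₀) * (2 * r ^ 2 * a) + γ * a| ≤ ε) :
    |a| ≤ 2 * ε / γ ∧ |b| ≤ |z₀| + ε + r ^ 2 * (2 * ε / γ) ^ 2 :=
  single_active_input_stays_blank_general r z₀ a b γ ε hγ hsmall h1 h2
end

section
/- Let r₁, r₂, z_S, z₀, a₁, a₂, b ∈ ℝ, γ₁, γ₂ ∈ (0, 1], ε_stat ≥ 0, U ≥ 0. Assume the approximate stationarity conditions: (i) |(r₁·a₁)² + (r₂·a₂)² + b + z₀| ≤ ε_stat; (ii) |(2·r₁·r₂·a₁·a₂ + z_S)·(2·r₁·r₂·a₂) + ((r₁·a₁)² + (r₂·a₂)² + b + z₀)·(2·r₁²·a₁) + γ₁·a₁| ≤ ε_stat; (iii) the same with the roles of the indices 1 and 2 swapped; (iv) |a₁| ≤ U and |a₂| ≤ U. Set ρ = (2·r₁·r₂·a₁·a₂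 + z_S)·(2·r₁·r₂) and ε' = (1 + 2·max(r₁², r₂²)·U)·ε_stat. If additionally |γ₁·γ₂ − ρ²| ≥ γ₁·γ₂/2, then max(|a₁|, |a₂|) ≤ 8·ε'·(1 + U² + |z_S|)·max(1, (r₁·r₂)²)/(γ₁·γ₂). -/
/-!
The regularizer makes the Hessian block `[[γ₁, ρ], [ρ, γ₂]]` of the product feature
well conditioned. Once the residual `S = (r₁a₁)² + (r₂a₂)² + b + z₀` is known to be small,
the two stationarity conditions say that this matrix maps `(a₁, a₂)` to a vector of size
`O(ε')`; Cramer's rule then bounds `|a₁|` and `|a₂|` by `(γ + |ρ|) ε' / |γ₁γ₂ - ρ²|`, and the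
determinant condition together with `|ρ| ≤ 4 max 1 ((r₁r₂)²) (U² + |z_S|)` gives the claim.
-/

lemma abs_le_add_of_abs_add_le {x y ε δ : ℝ} (h : |x + y| ≤ ε) (hy : |y| ≤ δ) :
    |x| ≤ ε + δ :=
  calc |x| = |(x + y) - y| := by rw [add_sub_cancel_right]
    _ ≤ |x + y| + |y| := abs_sub _ _
    _ ≤ ε + δ := add_le_add h hy

/-- Removing the residual term `S · ∂_a S` from a stationarity condition. -/
lemma abs_add_mul_le_of_abs_add_residual_le {X S r a γ m U ε : ℝ}
    (hS : |S| ≤ ε) (ha : |a| ≤ U) (hr : r ^ 2 ≤ m)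
    (h : |X + S * (2 * r ^ 2 * a) + γ * a| ≤ ε) :
    |γ * a + X| ≤ (1 + 2 * m * U) * ε := by
  have hSa : |S * (2 * r ^ 2 * a)| ≤ ε * (2 * m * U) := by
    rw [abs_mul, abs_mul, abs_of_nonneg (by positivity : (0 : ℝ) ≤ 2 * r ^ 2)]
    have hm : 0 ≤ m := (sq_nonneg r).trans hr
    exact mul_le_mul hS (by gcongr) (by positivity) ((abs_nonneg S).trans hS)
  have h' : |(γ * a + X) + S * (2 * r ^ 2 * a)| ≤ ε := by
    convert h using 2; ring
  linarith [abs_le_add_of_abs_add_le h' hSa]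

/-- Cramer's rule for the symmetric system `[[g₁, ρ], [ρ, g₂]] (x, y) ≈ 0`. -/
lemma abs_det_mul_abs_le_of_abs_le {g₁ g₂ ρ x y e : ℝ} (hg₂ : 0 ≤ g₂)
    (h₁ : |g₁ * x + ρ * y| ≤ e) (h₂ : |g₂ * y + ρ * x| ≤ e) :
    |g₁ * g₂ - ρ ^ 2| * |x| ≤ (g₂ + |ρ|) * e :=
  calc |g₁ * g₂ - ρ ^ 2| * |x|
      = |g₂ * (g₁ * x + ρ * y) + -ρ * (g₂ * y + ρ * x)| := by rw [← abs_mul]; congr 1; ring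
    _ ≤ |g₂ * (g₁ * x + ρ * y)| + |-ρ * (g₂ * y + ρ * x)| := abs_add_le _ _
    _ = g₂ * |g₁ * x + ρ * y| + |ρ| * |g₂ * y + ρ * x| := by
        rw [abs_mul, abs_mul, abs_neg, abs_of_nonneg hg₂]
    _ ≤ g₂ * e + |ρ| * e := by gcongr
    _ = (g₂ + |ρ|) * e := by ring

lemma abs_le_max_one_sq (t : ℝ) : |t| ≤ max 1 (t ^ 2) := by
  rcases le_total |t| 1 with ht | ht
  · exact ht.trans (le_max_left _ _)
  · rw [← sq_abs]
    exact (le_self_pow₀ ht two_ne_zero).trans (le_max_right _ _)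

lemma abs_coupling_le {t a₁ a₂ z U : ℝ} (h₁ : |a₁| ≤ U) (h₂ : |a₂| ≤ U) :
    |(2 * t * a₁ * a₂ + z) * (2 * t)| ≤ 4 * max 1 (t ^ 2) * (U ^ 2 + |z|) := by
  have ht : |t| ≤ max 1 (t ^ 2) := abs_le_max_one_sq t
  have ht2 : |t| ^ 2 ≤ max 1 (t ^ 2) := by rw [sq_abs]; exact le_max_right _ _
  have ha : |a₁| * |a₂| ≤ U ^ 2 := by
    rw [sq]; exact mul_le_mul h₁ h₂ (abs_nonneg _) ((abs_nonneg _).trans h₁)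
  have hz : |2 * t * a₁ * a₂ + z| ≤ 2 * |t| * U ^ 2 + |z| :=
    calc |2 * t * a₁ * a₂ + z| ≤ |2 * t * a₁ * a₂| + |z| := abs_add_le _ _
      _ = 2 * |t| * (|a₁| * |a₂|) + |z| := by simp only [abs_mul, abs_two]; ring
      _ ≤ 2 * |t| * U ^ 2 + |z| := by gcongr
  calc |(2 * t * a₁ * a₂ + z) * (2 * t)|
      = |2 * t * a₁ * a₂ + z| * (2 * |t|) := by rw [abs_mul, abs_mul, abs_two]
    _ ≤ (2 * |t| * U ^ 2 + |z|) * (2 * |t|) := by gcongr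
    _ = 4 * |t| ^ 2 * U ^ 2 + 2 * |t| * |z| := by ring
    _ ≤ 4 * max 1 (t ^ 2) * U ^ 2 + 4 * max 1 (t ^ 2) * |z| := by
        gcongr
        · nlinarith [abs_nonneg t, abs_nonneg z]
    _ = 4 * max 1 (t ^ 2) * (U ^ 2 + |z|) := by ring

lemma abs_le_of_abs_det_mul_abs_le {D det a g ρ e K : ℝ} (hD : 0 < D) (he : 0 ≤ e)
    (hdet : D / 2 ≤ |det|) (ha : |det| * |a| ≤ (g + |ρ|) * e) (hK : g + |ρ| ≤ K) :
    |a| ≤ 2 * K * e / D := by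
  rw [le_div_iff₀ hD]
  nlinarith [abs_nonneg a, mul_le_mul_of_nonneg_right hK he,
    mul_le_mul_of_nonneg_right hdet (abs_nonneg a)]

theorem two_active_inputs_not_useful_stays_blank_general
    (r₁ r₂ zS z₀ a₁ a₂ b γ₁ γ₂ εstat U : ℝ)
    (hγ₁ : 0 < γ₁) (hγ₁' : γ₁ ≤ 1) (hγ₂ : 0 < γ₂) (hγ₂' : γ₂ ≤ 1)
    (h1 : |(r₁ * a₁) ^ 2 + (r₂ * a₂) ^ 2 + b + z₀| ≤ εstat)
    (h2 : |(2 * r₁ * r₂ * a₁ * a₂ + zS) * (2 * r₁ * r₂ * a₂)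
        + ((r₁ * a₁) ^ 2 + (r₂ * a₂) ^ 2 + b + z₀) * (2 * r₁ ^ 2 * a₁)
        + γ₁ * a₁| ≤ εstat)
    (h3 : |(2 * r₁ * r₂ * a₁ * a₂ + zS) * (2 * r₁ * r₂ * a₁)
        + ((r₁ * a₁) ^ 2 + (r₂ * a₂) ^ 2 + b + z₀) * (2 * r₂ ^ 2 * a₂)
        + γ₂ * a₂| ≤ εstat)
    (h4 : |a₁| ≤ U) (h5 : |a₂| ≤ U)
    (hdet : γ₁ * γ₂ / 2 ≤ |γ₁ * γ₂ - ((2 * r₁ * r₂ * a₁ * a₂ + zS) * (2 * r₁ * r₂)) ^ 2|) :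
    max |a₁| |a₂|
      ≤ 8 * ((1 + 2 * max (r₁ ^ 2) (r₂ ^ 2) * U) * εstat) * (1 + U ^ 2 + |zS|)
          * max 1 ((r₁ * r₂) ^ 2) / (γ₁ * γ₂) := by
  set ρ := (2 * r₁ * r₂ * a₁ * a₂ + zS) * (2 * r₁ * r₂)
  set ε' := (1 + 2 * max (r₁ ^ 2) (r₂ ^ 2) * U) * εstat
  set M := max 1 ((r₁ * r₂) ^ 2)
  have hU : 0 ≤ U := (abs_nonneg a₁).trans h4
  have hε' : 0 ≤ ε' := by
    have := (abs_nonneg _).trans h1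
    positivity
  have e₁ : |γ₁ * a₁ + ρ * a₂| ≤ ε' := by
    convert abs_add_mul_le_of_abs_add_residual_le h1 h4 (le_max_left _ _) h2 using 3; ring
  have e₂ : |γ₂ * a₂ + ρ * a₁| ≤ ε' := by
    convert abs_add_mul_le_of_abs_add_residual_le h1 h5 (le_max_right _ _) h3 using 3; ring
  have hρM : |ρ| ≤ 4 * M * (U ^ 2 + |zS|) := by
    convert abs_coupling_le (t := r₁ * r₂) (z := zS) h4 h5 using 2; ring
  have hK : ∀ γ ≤ 1, γ + |ρ| ≤ 4 * M * (1 + U ^ 2 + |zS|) := fun γ hγ => by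
    nlinarith [le_max_left 1 ((r₁ * r₂) ^ 2), sq_nonneg U, abs_nonneg zS]
  have hγ := mul_pos hγ₁ hγ₂
  calc max |a₁| |a₂| ≤ 2 * (4 * M * (1 + U ^ 2 + |zS|)) * ε' / (γ₁ * γ₂) :=
        max_le
          (abs_le_of_abs_det_mul_abs_le hγ hε' hdet
            (abs_det_mul_abs_le_of_abs_le hγ₂.le e₁ e₂) (hK γ₂ hγ₂'))
          (abs_le_of_abs_det_mul_abs_le hγ hε' (mul_comm γ₁ γ₂ ▸ hdet)
            (abs_det_mul_abs_le_of_abs_le hγ₁.le e₂ e₁) (hK γ₁ hγ₁'))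
    _ = _ := by ring

/-- When the product feature is not useful (the determinant condition
`|γ₁γ₂ − ρ²| ≥ γ₁γ₂/2` holds), approximate stationarity of the regularized idealized loss
forces both input weights to be small, so the trained neuron remains blank. -/
theorem two_active_inputs_not_useful_stays_blank
    (r₁ r₂ zS z₀ a₁ a₂ b γ₁ γ₂ εstat U : ℝ)
    (hγ₁ : 0 < γ₁) (hγ₁' : γ₁ ≤ 1) (hγ₂ : 0 < γ₂) (hγ₂' : γ₂ ≤ 1)
    (hε : 0 ≤ εstat) (hU : 0 ≤ U)
    (h1 : |(r₁ * a₁) ^ 2 + (r₂ * a₂) ^ 2 + b + z₀| ≤ εstat)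
    (h2 : |(2 * r₁ * r₂ * a₁ * a₂ + zS) * (2 * r₁ * r₂ * a₂)
        + ((r₁ * a₁) ^ 2 + (r₂ * a₂) ^ 2 + b + z₀) * (2 * r₁ ^ 2 * a₁)
        + γ₁ * a₁| ≤ εstat)
    (h3 : |(2 * r₁ * r₂ * a₁ * a₂ + zS) * (2 * r₁ * r₂ * a₁)
        + ((r₁ * a₁) ^ 2 + (r₂ * a₂) ^ 2 + b + z₀) * (2 * r₂ ^ 2 * a₂)
        + γ₂ * a₂| ≤ εstat)
    (h4 : |a₁| ≤ U) (h5 : |a₂| ≤ U)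
    (hdet : γ₁ * γ₂ / 2 ≤ |γ₁ * γ₂ - ((2 * r₁ * r₂ * a₁ * a₂ + zS) * (2 * r₁ * r₂)) ^ 2|) :
    max |a₁| |a₂|
      ≤ 8 * ((1 + 2 * max (r₁ ^ 2) (r₂ ^ 2) * U) * εstat) * (1 + U ^ 2 + |zS|)
          * max 1 ((r₁ * r₂) ^ 2) / (γ₁ * γ₂) :=
  two_active_inputs_not_useful_stays_blank_general r₁ r₂ zS z₀ a₁ a₂ b γ₁ γ₂ εstat U hγ₁ hγ₁' hγ₂
    hγ₂' h1 h2 h3 h4 h5 hdet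
end

section
/- Let r₁, r₂ be nonzero reals, z_S, z₀, a₁, a₂, b ∈ ℝ, γ₁, γ₂ > 0, ε_stat ≥ 0, U ≥ 0. Assume the approximate stationarity conditions: (i) |(r₁·a₁)² + (r₂·a₂)² + b + z₀| ≤ ε_stat; (ii) |(2·r₁·r₂·a₁·a₂ + z_S)·(2·r₁·r₂·a₂) + ((r₁·a₁)² + (r₂·a₂)² + b + z₀)·(2·r₁²·a₁) + γ₁·a₁| ≤ ε_stat; (iii) the same with the roles of the indices 1 and 2 swapped; (iv) |a₁| ≤ U and |a₂| ≤ U. Set ρ = (2·r₁·r₂·a₁·a₂ + z_S)·(2·r₁·r₂) and ε' = (1 + 2·max(r₁², r₂²)·U)·ε_stat. Assume furthermore: γ₁·γ₂/2 ≤ ρ² ≤ 3·γ₁·γ₂/2; |z_S| ≥ √3·max(γ₁, γ₂)/|r₁·r₂|; and ε' ≤ min(γ₁, γ₂)·√(|z_S|/|r₁·r₂|)/8. Then: (a) |z_S|/2 ≤ |2·r₁·r₂·a₁·a₂| ≤ 2·|z_S|; (b) for each pair of distinct indices i, j ∈ {1,2}, (1/4)·|a_i| ≤ √(γ_j/γ_i)·|a_j|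 ≤ 4·|a_i|; (c) for each i ∈ {1,2}, (1/8)·√((min(γ₁,γ₂)/max(γ₁,γ₂))·|z_S|/|r₁·r₂|) ≤ |a_i| ≤ 4·√((max(γ₁,γ₂)/min(γ₁,γ₂))·|z_S|/|r₁·r₂|); and (d) |2·r₁·r₂·a₁·a₂ + z_S| ≤ 4·√(γ₁·γ₂)/|r₁·r₂|. -/
/-! The residual `P = 2 r₁ r₂ a₁ a₂ + z_S` is small: the upper determinant bound and the size
of `|z_S|` give `|P| ≤ |z_S| / 2`, which pins `|a₁ a₂|` to within a factor 4 of
`σ² = |z_S| / |r₁ r₂|`. Stationarity leaves `γ₁ |a₁| ≤ |ρ| |a₂| + ε'` and its mirror image,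
with `|ρ| ≤ (5/4) √(γ₁ γ₂)`. Writing `γ₁ = α⁴`, `γ₂ = β⁴`, the balanced quantities
`u = α² |a₁|`, `v = β² |a₂|` satisfy `u ≤ k v + t/8`, `v ≤ k u + t/8` with `k ≤ 5/4`,
`t = α β σ` and `t²/4 ≤ u v ≤ t²`. If one of them were below `t/4`, the other would be below
`7t/16` and their product below `t²/4`; so both are at least `t/4`, and all the stated
comparisons follow. -/

open Real

lemma abs_le_of_abs_add_mul_le_s11 {x e y ε K : ℝ} (h : |x + e * y| ≤ ε) (he : |e| ≤ ε)
    (hy : |y| ≤ K) : |x| ≤ (1 + K) * ε := by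
  have hey : |e * y| ≤ ε * K := by
    rw [abs_mul]
    exact mul_le_mul he hy (abs_nonneg y) ((abs_nonneg e).trans he)
  calc |x| = |(x + e * y) - e * y| := by rw [add_sub_cancel_right]
    _ ≤ |x + e * y| + |e * y| := abs_sub _ _
    _ ≤ (1 + K) * ε := by linarith

lemma mul_abs_le_of_abs_grad_le {P D c r a a' γ ε M U : ℝ} (hγ : 0 ≤ γ) (hD : |D| ≤ ε)
    (hgrad : |P * (c * a') + D * (2 * r ^ 2 * a) + γ * a| ≤ ε) (hr : r ^ 2 ≤ M)
    (ha : |a| ≤ U) :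
    γ * |a| ≤ |P * c| * |a'| + (1 + 2 * M * U) * ε := by
  have hra : |2 * r ^ 2 * a| ≤ 2 * M * U := by
    rw [abs_mul, abs_mul, abs_two, abs_of_nonneg (sq_nonneg r)]
    have := mul_le_mul hr ha (abs_nonneg a) ((sq_nonneg r).trans hr)
    linarith
  have hsum : |P * c * a' + γ * a| ≤ (1 + 2 * M * U) * ε :=
    abs_le_of_abs_add_mul_le_s11 (by convert hgrad using 2; ring) hD hra
  calc γ * |a| = |(P * c * a' + γ * a) - P * c * a'| := by
        rw [add_sub_cancel_left, abs_mul, abs_of_nonneg hγ]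
    _ ≤ |P * c * a' + γ * a| + |P * c * a'| := abs_sub _ _
    _ ≤ |P * c| * |a'| + (1 + 2 * M * U) * ε := by
        rw [abs_mul (P * c)]; linarith

lemma abs_le_half_of_sq_mul_le {P z r₁ r₂ γ₁ γ₂ : ℝ} (hγ₁ : 0 ≤ γ₁) (hγ₂ : 0 ≤ γ₂)
    (hr : r₁ * r₂ ≠ 0) (hρ : (P * (2 * r₁ * r₂)) ^ 2 ≤ 3 * (γ₁ * γ₂) / 2)
    (hz : √3 * max γ₁ γ₂ / |r₁ * r₂| ≤ |z|) : |P| ≤ |z| / 2 := by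
  have hγ : γ₁ * γ₂ ≤ max γ₁ γ₂ ^ 2 := by
    rw [sq]
    exact mul_le_mul (le_max_left _ _) (le_max_right _ _) hγ₂ (hγ₁.trans (le_max_left _ _))
  have hz' : 3 * max γ₁ γ₂ ^ 2 ≤ (z * (r₁ * r₂)) ^ 2 := by
    rw [div_le_iff₀ (abs_pos.mpr hr)] at hz
    have := pow_le_pow_left₀ (by positivity) hz 2
    rwa [mul_pow, sq_sqrt (by norm_num), ← abs_mul, sq_abs] at this
  have hR : 0 < (r₁ * r₂) ^ 2 := by positivity
  have hP : P ^ 2 ≤ (z / 2) ^ 2 := by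
    have : P ^ 2 * (r₁ * r₂) ^ 2 ≤ (z / 2) ^ 2 * (r₁ * r₂) ^ 2 := by nlinarith
    exact le_of_mul_le_mul_right this hR
  simpa [abs_div] using sq_le_sq.mp hP

lemma abs_le_sqrt_div_of_sq_mul_le {P r₁ r₂ γ₁ γ₂ : ℝ} (hr : r₁ * r₂ ≠ 0)
    (hρ : (P * (2 * r₁ * r₂)) ^ 2 ≤ 3 * (γ₁ * γ₂) / 2) :
    |P| ≤ 4 * √(γ₁ * γ₂) / |r₁ * r₂| := by
  rw [le_div_iff₀ (abs_pos.mpr hr), ← abs_mul]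
  have := abs_le_sqrt (x := P * (r₁ * r₂)) (y := γ₁ * γ₂) (by nlinarith)
  linarith [sqrt_nonneg (γ₁ * γ₂)]

lemma abs_sub_bounds_of_abs_le_half {P z : ℝ} (h : |P| ≤ |z| / 2) :
    |z| / 2 ≤ |P - z| ∧ |P - z| ≤ 2 * |z| := by
  constructor
  · linarith [abs_sub_abs_le_abs_sub z P, abs_sub_comm z P]
  · linarith [abs_sub P z, abs_nonneg z]

lemma abs_mul_abs_bounds {r₁ r₂ a₁ a₂ z : ℝ} (hr : r₁ * r₂ ≠ 0)
    (h : |z| / 2 ≤ |2 * r₁ * r₂ * a₁ * a₂| ∧ |2 * r₁ * r₂ * a₁ * a₂| ≤ 2 * |z|) :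
    |z| / |r₁ * r₂| / 4 ≤ |a₁| * |a₂| ∧ |a₁| * |a₂| ≤ |z| / |r₁ * r₂| := by
  have hR := abs_pos.mpr hr
  have e : |2 * r₁ * r₂ * a₁ * a₂| = 2 * |r₁ * r₂| * (|a₁| * |a₂|) := by
    rw [show 2 * r₁ * r₂ * a₁ * a₂ = 2 * (r₁ * r₂) * (a₁ * a₂) by ring, abs_mul (2 * _),
      abs_mul 2, abs_mul a₁, abs_two]
  rw [e] at h
  constructor
  · rw [div_div, div_le_iff₀ (by positivity)]; linarith
  · rw [le_div_iff₀ hR]; linarith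

lemma quarter_le_of_le_mul_add {u v k t : ℝ} (hu : 0 ≤ u) (hk : k ≤ 5 / 4)
    (hv : v ≤ k * u + t / 8) (huv : t ^ 2 / 4 ≤ u * v) : t / 4 ≤ u := by
  by_contra! h
  have hku : k * u ≤ 5 / 4 * u := mul_le_mul_of_nonneg_right hk hu
  nlinarith

lemma le_four_mul_of_le_mul_add {u v k t : ℝ} (hk : k ≤ 5 / 4) (hu : u ≤ k * v + t / 8)
    (hv₀ : 0 ≤ v) (hv : t / 4 ≤ v) : u ≤ 4 * v := by
  nlinarith [mul_le_mul_of_nonneg_right hk hv₀]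

lemma le_two_mul_of_le_four_mul {u v t : ℝ} (hu : 0 ≤ u) (ht : 0 ≤ t) (h : u ≤ 4 * v)
    (huv : u * v ≤ t ^ 2) : u ≤ 2 * t := by
  nlinarith [mul_le_mul_of_nonneg_left h hu]

lemma min_pow_four_le_pow_three_mul {α β : ℝ} (hα : 0 ≤ α) (hβ : 0 ≤ β) :
    min (α ^ 4) (β ^ 4) ≤ α ^ 3 * β := by
  rcases le_total α β with h | h
  · calc min (α ^ 4) (β ^ 4) ≤ α ^ 4 := min_le_left _ _
      _ = α ^ 3 * α := by ring
      _ ≤ α ^ 3 * β := by gcongr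
  · calc min (α ^ 4) (β ^ 4) ≤ β ^ 4 := min_le_right _ _
      _ = β ^ 3 * β := by ring
      _ ≤ α ^ 3 * β := by gcongr

lemma le_div_mul_add_of_pow_four_mul_le {α β x y p e σ : ℝ} (hα : 0 < α) (hβ : 0 < β)
    (h : α ^ 4 * x ≤ p * y + e) (he : e ≤ min (α ^ 4) (β ^ 4) * σ / 8) (hσ : 0 ≤ σ) :
    α ^ 2 * x ≤ p / (α ^ 2 * β ^ 2) * (β ^ 2 * y) + α * β * σ / 8 := by
  have he' : e ≤ α ^ 3 * β * σ / 8 := by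
    have := min_pow_four_le_pow_three_mul hα.le hβ.le
    have := mul_le_mul_of_nonneg_right this hσ
    linarith
  have hα2 : 0 < α ^ 2 := by positivity
  refine le_of_mul_le_mul_left ?_ hα2
  have : α ^ 2 * (p / (α ^ 2 * β ^ 2) * (β ^ 2 * y) + α * β * σ / 8)
      = p * y + α ^ 3 * β * σ / 8 := by field_simp
  rw [this]
  linarith

lemma active_bounds_of_pow_four {α β x y p e σ : ℝ} (hα : 0 < α) (hβ : 0 < β) (hx : 0 ≤ x)
    (hy : 0 ≤ y) (hσ : 0 ≤ σ) (hp : p ^ 2 ≤ 3 * (α ^ 4 * β ^ 4) / 2) (h₁ : α ^ 4 * x ≤ |p| * y + e)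
    (h₂ : β ^ 4 * y ≤ |p| * x + e) (he : e ≤ min (α ^ 4) (β ^ 4) * σ / 8)
    (hlow : σ ^ 2 / 4 ≤ x * y) (hhigh : x * y ≤ σ ^ 2) :
    β * σ ≤ 4 * (α * x) ∧ α ^ 2 * x ≤ 4 * (β ^ 2 * y) ∧ α * x ≤ 2 * (β * σ) := by
  set c := α ^ 2 * β ^ 2 with hc_def
  set u := α ^ 2 * x
  set v := β ^ 2 * y
  set t := α * β * σ
  have hc : 0 < c := by positivity
  have hk : |p| / c ≤ 5 / 4 := by
    rw [div_le_iff₀ hc]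
    nlinarith [sq_abs p, abs_nonneg p]
  have hu : u ≤ |p| / c * v + t / 8 := le_div_mul_add_of_pow_four_mul_le hα hβ h₁ he hσ
  have hv : v ≤ |p| / c * u + t / 8 := by
    rw [hc_def, mul_comm (α ^ 2)]
    rw [min_comm] at he
    simpa only [t, mul_comm α β] using le_div_mul_add_of_pow_four_mul_le hβ hα h₂ he hσ
  have huv : u * v = c * (x * y) := by ring
  have ht : t ^ 2 = c * σ ^ 2 := by ring
  have hlow' : t ^ 2 / 4 ≤ u * v := by
    rw [huv, ht]; linarith [mul_le_mul_of_nonneg_left hlow hc.le]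
  have hhigh' : u * v ≤ t ^ 2 := by rw [huv, ht]; exact mul_le_mul_of_nonneg_left hhigh hc.le
  have hu₀ : 0 ≤ u := by positivity
  have hv₀ : 0 ≤ v := by positivity
  have hut : t / 4 ≤ u := quarter_le_of_le_mul_add hu₀ hk hv (by linarith [mul_comm u v])
  have hvt : t / 4 ≤ v := quarter_le_of_le_mul_add hv₀ hk hu (by linarith [mul_comm u v])
  have huv4 : u ≤ 4 * v := le_four_mul_of_le_mul_add hk hu hv₀ hvt
  have hu2 : u ≤ 2 * t := le_two_mul_of_le_four_mul hu₀ (by positivity) huv4 hhigh'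
  refine ⟨le_of_mul_le_mul_left ?_ hα, huv4, le_of_mul_le_mul_left ?_ hα⟩
  · linarith [show α * (β * σ) = t by ring, show α * (4 * (α * x)) = 4 * u by ring]
  · linarith [show α * (α * x) = u by ring, show α * (2 * (β * σ)) = 2 * t by ring]

lemma min_div_max_le_sqrt_div {a b : ℝ} (ha : 0 < a) (hb : 0 < b) :
    min a b / max a b ≤ √(b / a) := by
  rcases le_total a b with h | h
  · rw [min_eq_left h, max_eq_right h]
    calc a / b ≤ 1 := div_le_one_of_le₀ h hb.le
      _ ≤ √(b / a) := one_le_sqrt.mpr ((one_le_div ha).mpr h)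
  · rw [min_eq_right h, max_eq_left h]
    have : b / a ≤ 1 := div_le_one_of_le₀ h ha.le
    exact le_sqrt_of_sq_le (by nlinarith [div_pos hb ha])

lemma sqrt_div_le_max_div_min {a b : ℝ} (ha : 0 < a) (hb : 0 < b) :
    √(b / a) ≤ max a b / min a b := by
  rcases le_total a b with h | h
  · rw [min_eq_left h, max_eq_right h]
    have : 1 ≤ b / a := (one_le_div ha).mpr h
    exact (sqrt_le_left (by linarith)).mpr (by nlinarith)
  · rw [min_eq_right h, max_eq_left h]
    calc √(b / a) ≤ 1 := sqrt_le_one.mpr (div_le_one_of_le₀ h ha.le)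
      _ ≤ a / b := (one_le_div hb).mpr h

lemma exists_pos_pow_four_eq {γ : ℝ} (hγ : 0 < γ) : ∃ α, 0 < α ∧ α ^ 4 = γ :=
  ⟨√√γ, by positivity, by
    rw [show 4 = 2 * 2 from rfl, pow_mul, sq_sqrt (sqrt_nonneg γ), sq_sqrt hγ.le]⟩

lemma active_bounds {γ₁ γ₂ x y p e σ : ℝ} (hγ₁ : 0 < γ₁) (hγ₂ : 0 < γ₂) (hx : 0 ≤ x)
    (hy : 0 ≤ y) (hσ : 0 ≤ σ) (hp : p ^ 2 ≤ 3 * (γ₁ * γ₂) / 2) (h₁ : γ₁ * x ≤ |p| * y + e)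
    (h₂ : γ₂ * y ≤ |p| * x + e) (he : e ≤ min γ₁ γ₂ * σ / 8)
    (hlow : σ ^ 2 / 4 ≤ x * y) (hhigh : x * y ≤ σ ^ 2) :
    ((1 / 4) * x ≤ √(γ₂ / γ₁) * y ∧ √(γ₂ / γ₁) * y ≤ 4 * x) ∧
    ((1 / 8) * √(min γ₁ γ₂ / max γ₁ γ₂ * σ ^ 2) ≤ x ∧
      x ≤ 4 * √(max γ₁ γ₂ / min γ₁ γ₂ * σ ^ 2)) := by
  have hmin := min_div_max_le_sqrt_div hγ₁ hγ₂
  have hmax := sqrt_div_le_max_div_min hγ₁ hγ₂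
  rw [sqrt_mul' _ (sq_nonneg σ), sqrt_sq hσ, sqrt_mul' _ (sq_nonneg σ), sqrt_sq hσ]
  obtain ⟨α, hα, rfl⟩ := exists_pos_pow_four_eq hγ₁
  obtain ⟨β, hβ, rfl⟩ := exists_pos_pow_four_eq hγ₂
  obtain ⟨hσx, hxy, hxσ⟩ :=
    active_bounds_of_pow_four hα hβ hx hy hσ hp h₁ h₂ he hlow hhigh
  obtain ⟨-, hyx, -⟩ := active_bounds_of_pow_four hβ hα hy hx hσ (by rwa [mul_comm (β ^ 4)])
    h₂ h₁ (by rwa [min_comm]) (by rwa [mul_comm y]) (by rwa [mul_comm y])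
  have hw : √(β ^ 4 / α ^ 4) = (β / α) ^ 2 := by
    rw [← div_pow, show 4 = 2 * 2 from rfl, pow_mul, sqrt_sq (by positivity)]
  rw [hw] at hmin hmax ⊢
  have hlo : √(min (α ^ 4) (β ^ 4) / max (α ^ 4) (β ^ 4)) ≤ β / α :=
    (sqrt_le_left (by positivity)).mpr hmin
  have hhi : β / α ≤ √(max (α ^ 4) (β ^ 4) / min (α ^ 4) (β ^ 4)) := le_sqrt_of_sq_le hmax
  have hσx' : β / α * σ ≤ 4 * x := by rw [div_mul_eq_mul_div, div_le_iff₀ hα]; linarith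
  have hxσ' : x ≤ 2 * (β / α * σ) := by
    rw [div_mul_eq_mul_div, mul_div_assoc', le_div_iff₀ hα]; linarith
  refine ⟨⟨?_, ?_⟩, ?_, ?_⟩
  · rw [div_pow, div_mul_eq_mul_div (β ^ 2), le_div_iff₀ (by positivity)]; linarith
  · rw [div_pow, div_mul_eq_mul_div (β ^ 2), div_le_iff₀ (by positivity)]; linarith
  · linarith [mul_le_mul_of_nonneg_right hlo hσ]
  · linarith [mul_le_mul_of_nonneg_right hhi hσ, mul_nonneg (div_pos hβ hα).le hσ]

theorem two_active_inputs_useful_becomes_active_general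
    (r₁ r₂ zS z₀ a₁ a₂ b γ₁ γ₂ εstat U : ℝ)
    (hr₁ : r₁ ≠ 0) (hr₂ : r₂ ≠ 0)
    (hγ₁ : 0 < γ₁) (hγ₂ : 0 < γ₂)
    (h1 : |(r₁ * a₁) ^ 2 + (r₂ * a₂) ^ 2 + b + z₀| ≤ εstat)
    (h2 : |(2 * r₁ * r₂ * a₁ * a₂ + zS) * (2 * r₁ * r₂ * a₂)
        + ((r₁ * a₁) ^ 2 + (r₂ * a₂) ^ 2 + b + z₀) * (2 * r₁ ^ 2 * a₁)
        + γ₁ * a₁| ≤ εstat)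
    (h3 : |(2 * r₁ * r₂ * a₁ * a₂ + zS) * (2 * r₁ * r₂ * a₁)
        + ((r₁ * a₁) ^ 2 + (r₂ * a₂) ^ 2 + b + z₀) * (2 * r₂ ^ 2 * a₂)
        + γ₂ * a₂| ≤ εstat)
    (h4 : |a₁| ≤ U) (h5 : |a₂| ≤ U)
    (hρhigh : ((2 * r₁ * r₂ * a₁ * a₂ + zS) * (2 * r₁ * r₂)) ^ 2 ≤ 3 * (γ₁ * γ₂) / 2)
    (hzS : Real.sqrt 3 * max γ₁ γ₂ / |r₁ * r₂| ≤ |zS|)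
    (hε' : (1 + 2 * max (r₁ ^ 2) (r₂ ^ 2) * U) * εstat
        ≤ min γ₁ γ₂ * Real.sqrt (|zS| / |r₁ * r₂|) / 8) :
    (|zS| / 2 ≤ |2 * r₁ * r₂ * a₁ * a₂| ∧ |2 * r₁ * r₂ * a₁ * a₂| ≤ 2 * |zS|) ∧
    ((1 / 4) * |a₁| ≤ Real.sqrt (γ₂ / γ₁) * |a₂| ∧ Real.sqrt (γ₂ / γ₁) * |a₂| ≤ 4 * |a₁|) ∧
    ((1 / 4) * |a₂| ≤ Real.sqrt (γ₁ / γ₂) * |a₁| ∧ Real.sqrt (γ₁ / γ₂) * |a₁| ≤ 4 * |a₂|) ∧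
    ((1 / 8) * Real.sqrt ((min γ₁ γ₂ / max γ₁ γ₂) * |zS| / |r₁ * r₂|) ≤ |a₁| ∧
      |a₁| ≤ 4 * Real.sqrt ((max γ₁ γ₂ / min γ₁ γ₂) * |zS| / |r₁ * r₂|)) ∧
    ((1 / 8) * Real.sqrt ((min γ₁ γ₂ / max γ₁ γ₂) * |zS| / |r₁ * r₂|) ≤ |a₂| ∧
      |a₂| ≤ 4 * Real.sqrt ((max γ₁ γ₂ / min γ₁ γ₂) * |zS| / |r₁ * r₂|)) ∧
    |2 * r₁ * r₂ * a₁ * a₂ + zS| ≤ 4 * Real.sqrt (γ₁ * γ₂) / |r₁ * r₂| := by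
  have hr : r₁ * r₂ ≠ 0 := mul_ne_zero hr₁ hr₂
  set σ := √(|zS| / |r₁ * r₂|)
  have hσ : σ ^ 2 = |zS| / |r₁ * r₂| := sq_sqrt (by positivity)
  have hprod :=
    abs_sub_bounds_of_abs_le_half (abs_le_half_of_sq_mul_le hγ₁.le hγ₂.le hr hρhigh hzS)
  rw [add_sub_cancel_right] at hprod
  obtain ⟨hlow, hhigh⟩ := abs_mul_abs_bounds hr hprod
  rw [← hσ] at hlow hhigh
  have hst₁ := mul_abs_le_of_abs_grad_le hγ₁.le h1 h2 (le_max_left _ (r₂ ^ 2)) h4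
  have hst₂ := mul_abs_le_of_abs_grad_le hγ₂.le h1 h3 (le_max_right (r₁ ^ 2) _) h5
  obtain ⟨hb₁, hc₁⟩ := active_bounds hγ₁ hγ₂ (abs_nonneg a₁) (abs_nonneg a₂) (sqrt_nonneg _)
    hρhigh hst₁ hst₂ hε' hlow hhigh
  obtain ⟨hb₂, hc₂⟩ := active_bounds hγ₂ hγ₁ (abs_nonneg a₂) (abs_nonneg a₁) (sqrt_nonneg _)
    (by rwa [mul_comm γ₂]) hst₂ hst₁ (by rwa [min_comm]) (by rwa [mul_comm |a₂|])
    (by rwa [mul_comm |a₂|])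
  rw [min_comm, max_comm] at hc₂
  rw [mul_div_assoc _ |zS|, mul_div_assoc _ |zS|, ← hσ]
  exact ⟨hprod, hb₁, hb₂, hc₁, hc₂, abs_le_sqrt_div_of_sq_mul_le hr hρhigh⟩

/-- When the product feature is useful and the determinant condition
`γ₁γ₂/2 ≤ ρ² ≤ 3γ₁γ₂/2` holds, approximate stationarity of the regularized idealized loss
forces the trained neuron to become active, approximately computing the product monomial
with scaling close to `−z_S`. -/
theorem two_active_inputs_useful_becomes_active
    (r₁ r₂ zS z₀ a₁ a₂ b γ₁ γ₂ εstat U : ℝ)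
    (hr₁ : r₁ ≠ 0) (hr₂ : r₂ ≠ 0)
    (hγ₁ : 0 < γ₁) (hγ₂ : 0 < γ₂) (hε : 0 ≤ εstat) (hU : 0 ≤ U)
    (h1 : |(r₁ * a₁) ^ 2 + (r₂ * a₂) ^ 2 + b + z₀| ≤ εstat)
    (h2 : |(2 * r₁ * r₂ * a₁ * a₂ + zS) * (2 * r₁ * r₂ * a₂)
        + ((r₁ * a₁) ^ 2 + (r₂ * a₂) ^ 2 + b + z₀) * (2 * r₁ ^ 2 * a₁)
        + γ₁ * a₁| ≤ εstat)
    (h3 : |(2 * r₁ * r₂ * a₁ * a₂ + zS) * (2 * r₁ * r₂ * a₁)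
        + ((r₁ * a₁) ^ 2 + (r₂ * a₂) ^ 2 + b + z₀) * (2 * r₂ ^ 2 * a₂)
        + γ₂ * a₂| ≤ εstat)
    (h4 : |a₁| ≤ U) (h5 : |a₂| ≤ U)
    (hρlow : γ₁ * γ₂ / 2 ≤ ((2 * r₁ * r₂ * a₁ * a₂ + zS) * (2 * r₁ * r₂)) ^ 2)
    (hρhigh : ((2 * r₁ * r₂ * a₁ * a₂ + zS) * (2 * r₁ * r₂)) ^ 2 ≤ 3 * (γ₁ * γ₂) / 2)
    (hzS : Real.sqrt 3 * max γ₁ γ₂ / |r₁ * r₂| ≤ |zS|)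
    (hε' : (1 + 2 * max (r₁ ^ 2) (r₂ ^ 2) * U) * εstat
        ≤ min γ₁ γ₂ * Real.sqrt (|zS| / |r₁ * r₂|) / 8) :
    (|zS| / 2 ≤ |2 * r₁ * r₂ * a₁ * a₂| ∧ |2 * r₁ * r₂ * a₁ * a₂| ≤ 2 * |zS|) ∧
    ((1 / 4) * |a₁| ≤ Real.sqrt (γ₂ / γ₁) * |a₂| ∧ Real.sqrt (γ₂ / γ₁) * |a₂| ≤ 4 * |a₁|) ∧
    ((1 / 4) * |a₂| ≤ Real.sqrt (γ₁ / γ₂) * |a₁| ∧ Real.sqrt (γ₁ / γ₂) * |a₁| ≤ 4 * |a₂|) ∧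
    ((1 / 8) * Real.sqrt ((min γ₁ γ₂ / max γ₁ γ₂) * |zS| / |r₁ * r₂|) ≤ |a₁| ∧
      |a₁| ≤ 4 * Real.sqrt ((max γ₁ γ₂ / min γ₁ γ₂) * |zS| / |r₁ * r₂|)) ∧
    ((1 / 8) * Real.sqrt ((min γ₁ γ₂ / max γ₁ γ₂) * |zS| / |r₁ * r₂|) ≤ |a₂| ∧
      |a₂| ≤ 4 * Real.sqrt ((max γ₁ γ₂ / min γ₁ γ₂) * |zS| / |r₁ * r₂|)) ∧
    |2 * r₁ * r₂ * a₁ * a₂ + zS| ≤ 4 * Real.sqrt (γ₁ * γ₂) / |r₁ * r₂| :=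
  two_active_inputs_useful_becomes_active_general r₁ r₂ zS z₀ a₁ a₂ b γ₁ γ₂ εstat U hr₁ hr₂ hγ₁ hγ₂
    h1 h2 h3 h4 h5 hρhigh hzS hε'
end

section
/- Let r₁, r₂, z_S, z₀ ∈ ℝ with r₁·r₂ ≠ 0 and z_S ≠ 0, and let η, τ > 0 with 4·τ ≤ η. Define ℓ̃(a₁, a₂, b) = ½·(2·r₁·r₂·a₁·a₂ + z_S)² + ½·(r₁²·a₁² + r₂²·a₂² + b + z₀)². Suppose: |a₁ˢ| ≤ τ and |a₂ˢ| ≤ τ; η/2 < |a₁ᵖ| ≤ η and η/2 < |a₂ᵖ| ≤ η; r₁·r₂·a₁ᵖ·a₂ᵖ·z_S < 0; |bᵖ| ≤ √(|r₁·r₂·z_S|)·η/8; 2·|r₁·r₂|·η² ≤ |z_S|/16; and |r₁·r₂|·η²·|z_S| ≥ 16·(r₁²·η² + r₂²·η² + |z₀|)². Then for every real bˢ, ℓ̃(a₁ˢ, a₂ˢ, bˢ) − ℓ̃(a₁ᵖ, a₂ᵖ, bᵖ) ≥ (1/32)·|r₁·r₂|·η²·|z_S|. -/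
/-!
At the pruned point the coupling `2 r₁ r₂ a₁ a₂` is at most `|r₁ r₂| η² / 8`, so the first square
of the loss is still about `z_S²`. At the perturbed point the coupling has the sign opposite to
`z_S` and size at least `|r₁ r₂| η² / 2`, so the first square drops below `z_S²` by a fixed
multiple of `M = |r₁ r₂| η² |z_S|`; the assumptions on `z₀` and `bᵖ` make the second square a
smaller multiple of `M`.
-/

noncomputable def idealLoss (r₁ r₂ zS z₀ a₁ a₂ b : ℝ) : ℝ :=
  (1 / 2) * (2 * r₁ * r₂ * a₁ * a₂ + zS) ^ 2
    + (1 / 2) * (r₁ ^ 2 * a₁ ^ 2 + r₂ ^ 2 * a₂ ^ 2 + b + z₀) ^ 2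

lemma sq_sub_two_mul_abs_mul_abs_le_sq_add (x z : ℝ) : z ^ 2 - 2 * |x| * |z| ≤ (x + z) ^ 2 := by
  nlinarith [neg_abs_le (x * z), abs_mul x z, sq_nonneg x]

lemma sq_add_le_sq_sub_abs_mul_abs_of_mul_nonpos {x z : ℝ} (hxz : x * z ≤ 0) (hx : |x| ≤ |z|) :
    (x + z) ^ 2 ≤ z ^ 2 - |x| * |z| := by
  have hprod : x * z = -(|x| * |z|) := by rw [← abs_mul, abs_of_nonpos hxz, neg_neg]
  nlinarith [sq_abs x, mul_le_mul_of_nonneg_left hx (abs_nonneg x)]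

lemma abs_mul_le_sq_of_abs_le {a b c : ℝ} (ha : |a| ≤ c) (hb : |b| ≤ c) : |a * b| ≤ c ^ 2 := by
  rw [abs_mul, sq]
  exact mul_le_mul ha hb (abs_nonneg b) ((abs_nonneg a).trans ha)

lemma sq_le_abs_mul_of_le_abs {a b c : ℝ} (hc : 0 ≤ c) (ha : c ≤ |a|) (hb : c ≤ |b|) :
    c ^ 2 ≤ |a * b| := by
  rw [abs_mul, sq]
  exact mul_le_mul ha hb hc (hc.trans ha)

lemma abs_two_mul_mul_mul_mul (r₁ r₂ a₁ a₂ : ℝ) :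
    |2 * r₁ * r₂ * a₁ * a₂| = 2 * |r₁ * r₂| * |a₁ * a₂| := by
  simp only [abs_mul, abs_two]
  ring

section Loss

variable {r₁ r₂ zS z₀ η a₁ a₂ b : ℝ}

lemma idealLoss_pruned_ge {τ : ℝ} (h₁ : |a₁| ≤ τ) (h₂ : |a₂| ≤ τ) (hτη : 4 * τ ≤ η) :
    zS ^ 2 / 2 - (|r₁ * r₂| * η ^ 2 * |zS|) / 8 ≤ idealLoss r₁ r₂ zS z₀ a₁ a₂ b := by
  have hτ : 0 ≤ τ := (abs_nonneg a₁).trans h₁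
  have hτ2 : 16 * τ ^ 2 ≤ η ^ 2 := by nlinarith
  have hcoupling : |2 * r₁ * r₂ * a₁ * a₂| ≤ |r₁ * r₂| * η ^ 2 / 8 := by
    rw [abs_two_mul_mul_mul_mul]
    nlinarith [mul_le_mul_of_nonneg_left (abs_mul_le_sq_of_abs_le h₁ h₂) (abs_nonneg (r₁ * r₂)),
      mul_le_mul_of_nonneg_left hτ2 (abs_nonneg (r₁ * r₂))]
  have hfirst := sq_sub_two_mul_abs_mul_abs_le_sq_add (2 * r₁ * r₂ * a₁ * a₂) zS
  unfold idealLoss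
  nlinarith [mul_le_mul_of_nonneg_right hcoupling (abs_nonneg zS),
    sq_nonneg (r₁ ^ 2 * a₁ ^ 2 + r₂ ^ 2 * a₂ ^ 2 + b + z₀)]

lemma sq_coupling_term_le (hp₁ : η / 2 < |a₁|) (hp₁' : |a₁| ≤ η) (hp₂ : η / 2 < |a₂|)
    (hp₂' : |a₂| ≤ η) (hsign : r₁ * r₂ * a₁ * a₂ * zS < 0)
    (hη2 : 2 * |r₁ * r₂| * η ^ 2 ≤ |zS| / 16) :
    (2 * r₁ * r₂ * a₁ * a₂ + zS) ^ 2 ≤ zS ^ 2 - (|r₁ * r₂| * η ^ 2 * |zS|) / 2 := by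
  have hη : 0 ≤ η := (abs_nonneg a₁).trans hp₁'
  have hlower : (η / 2) ^ 2 ≤ |a₁ * a₂| := sq_le_abs_mul_of_le_abs (by positivity) hp₁.le hp₂.le
  have hupper : |a₁ * a₂| ≤ η ^ 2 := abs_mul_le_sq_of_abs_le hp₁' hp₂'
  have hA := abs_nonneg (r₁ * r₂)
  have hsign' : 2 * r₁ * r₂ * a₁ * a₂ * zS ≤ 0 := by linarith
  have hsmall : |2 * r₁ * r₂ * a₁ * a₂| ≤ |zS| := by
    rw [abs_two_mul_mul_mul_mul]
    nlinarith [mul_le_mul_of_nonneg_left hupper hA, abs_nonneg zS]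
  have hlarge : |r₁ * r₂| * η ^ 2 / 2 ≤ |2 * r₁ * r₂ * a₁ * a₂| := by
    rw [abs_two_mul_mul_mul_mul]
    nlinarith [mul_le_mul_of_nonneg_left hlower hA]
  nlinarith [sq_add_le_sq_sub_abs_mul_abs_of_mul_nonpos hsign' hsmall,
    mul_le_mul_of_nonneg_right hlarge (abs_nonneg zS)]

lemma sq_offset_term_le (h₁ : |a₁| ≤ η) (h₂ : |a₂| ≤ η) (hb : |b| ≤ √|r₁ * r₂ * zS| * η / 8)
    (hbig : 16 * (r₁ ^ 2 * η ^ 2 + r₂ ^ 2 * η ^ 2 + |z₀|) ^ 2 ≤ |r₁ * r₂| * η ^ 2 * |zS|) :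
    (r₁ ^ 2 * a₁ ^ 2 + r₂ ^ 2 * a₂ ^ 2 + b + z₀) ^ 2 ≤ 5 / 32 * (|r₁ * r₂| * η ^ 2 * |zS|) := by
  set Q := r₁ ^ 2 * η ^ 2 + r₂ ^ 2 * η ^ 2 + |z₀|
  have ha₁ : a₁ ^ 2 ≤ η ^ 2 := sq_le_sq' (abs_le.mp h₁).1 (abs_le.mp h₁).2
  have ha₂ : a₂ ^ 2 ≤ η ^ 2 := sq_le_sq' (abs_le.mp h₂).1 (abs_le.mp h₂).2
  have hcenter : |r₁ ^ 2 * a₁ ^ 2 + r₂ ^ 2 * a₂ ^ 2 + z₀| ≤ Q := by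
    refine (abs_add_le _ _).trans ?_
    rw [abs_of_nonneg (by positivity)]
    linarith [mul_le_mul_of_nonneg_left ha₁ (sq_nonneg r₁),
      mul_le_mul_of_nonneg_left ha₂ (sq_nonneg r₂)]
  have hsum : |r₁ ^ 2 * a₁ ^ 2 + r₂ ^ 2 * a₂ ^ 2 + b + z₀| ≤ Q + |b| := by
    calc |r₁ ^ 2 * a₁ ^ 2 + r₂ ^ 2 * a₂ ^ 2 + b + z₀|
        = |(r₁ ^ 2 * a₁ ^ 2 + r₂ ^ 2 * a₂ ^ 2 + z₀) + b| := by congr 1; ring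
      _ ≤ Q + |b| := (abs_add_le _ _).trans (by gcongr)
  have hb2 : b ^ 2 ≤ |r₁ * r₂| * η ^ 2 * |zS| / 64 := by
    have hsqrt : √|r₁ * r₂ * zS| ^ 2 = |r₁ * r₂| * |zS| := by
      rw [Real.sq_sqrt (abs_nonneg _), abs_mul]
    calc b ^ 2 = |b| ^ 2 := (sq_abs b).symm
      _ ≤ (√|r₁ * r₂ * zS| * η / 8) ^ 2 := pow_le_pow_left₀ (abs_nonneg b) hb 2
      _ = |r₁ * r₂| * η ^ 2 * |zS| / 64 := by rw [div_pow, mul_pow, hsqrt]; ring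
  calc (r₁ ^ 2 * a₁ ^ 2 + r₂ ^ 2 * a₂ ^ 2 + b + z₀) ^ 2
      ≤ (Q + |b|) ^ 2 := sq_le_sq' (abs_le.mp hsum).1 (abs_le.mp hsum).2
    _ ≤ 2 * (Q ^ 2 + |b| ^ 2) := add_sq_le
    _ ≤ 5 / 32 * (|r₁ * r₂| * η ^ 2 * |zS|) := by rw [sq_abs]; linarith

lemma idealLoss_perturbed_le (hp₁ : η / 2 < |a₁|) (hp₁' : |a₁| ≤ η) (hp₂ : η / 2 < |a₂|)
    (hp₂' : |a₂| ≤ η) (hsign : r₁ * r₂ * a₁ * a₂ * zS < 0)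
    (hb : |b| ≤ √|r₁ * r₂ * zS| * η / 8) (hη2 : 2 * |r₁ * r₂| * η ^ 2 ≤ |zS| / 16)
    (hbig : 16 * (r₁ ^ 2 * η ^ 2 + r₂ ^ 2 * η ^ 2 + |z₀|) ^ 2 ≤ |r₁ * r₂| * η ^ 2 * |zS|) :
    idealLoss r₁ r₂ zS z₀ a₁ a₂ b ≤ zS ^ 2 / 2 - 11 / 64 * (|r₁ * r₂| * η ^ 2 * |zS|) := by
  have hfirst := sq_coupling_term_le hp₁ hp₁' hp₂ hp₂' hsign hη2
  have hsecond := sq_offset_term_le (z₀ := z₀) hp₁' hp₂' hb hbig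
  unfold idealLoss
  linarith

end Loss

theorem perturbed_loss_smaller_than_pruned_loss_general
    (r₁ r₂ zS z₀ η τ a₁s a₂s a₁p a₂p bp : ℝ)
    (hτη : 4 * τ ≤ η)
    (hs1 : |a₁s| ≤ τ) (hs2 : |a₂s| ≤ τ)
    (hp1 : η / 2 < |a₁p|) (hp1' : |a₁p| ≤ η)
    (hp2 : η / 2 < |a₂p|) (hp2' : |a₂p| ≤ η)
    (hsign : r₁ * r₂ * a₁p * a₂p * zS < 0)
    (hbp : |bp| ≤ Real.sqrt |r₁ * r₂ * zS| * η / 8)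
    (hη2 : 2 * |r₁ * r₂| * η ^ 2 ≤ |zS| / 16)
    (hbig : 16 * (r₁ ^ 2 * η ^ 2 + r₂ ^ 2 * η ^ 2 + |z₀|) ^ 2 ≤ |r₁ * r₂| * η ^ 2 * |zS|) :
    ∀ bs : ℝ,
      (1 / 32) * |r₁ * r₂| * η ^ 2 * |zS|
        ≤ ((1 / 2) * (2 * r₁ * r₂ * a₁s * a₂s + zS) ^ 2
              + (1 / 2) * (r₁ ^ 2 * a₁s ^ 2 + r₂ ^ 2 * a₂s ^ 2 + bs + z₀) ^ 2)
          - ((1 / 2) * (2 * r₁ * r₂ * a₁p * a₂p + zS) ^ 2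
              + (1 / 2) * (r₁ ^ 2 * a₁p ^ 2 + r₂ ^ 2 * a₂p ^ 2 + bp + z₀) ^ 2) := by
  intro bs
  have hpruned : zS ^ 2 / 2 - (|r₁ * r₂| * η ^ 2 * |zS|) / 8
      ≤ idealLoss r₁ r₂ zS z₀ a₁s a₂s bs := idealLoss_pruned_ge hs1 hs2 hτη
  have hperturbed := idealLoss_perturbed_le (z₀ := z₀) hp1 hp1' hp2 hp2' hsign hbp hη2 hbig
  have hM : 0 ≤ |r₁ * r₂| * η ^ 2 * |zS| := by positivity
  change _ ≤ idealLoss r₁ r₂ zS z₀ a₁s a₂s bs - idealLoss r₁ r₂ zS z₀ a₁p a₂p bp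
  linarith

/-- A well-initialized random perturbation has strictly smaller idealized loss than any
near-zero (pruned) parameter setting, by a margin `(1/32)·|r₁r₂|·η²·|z_S|`. -/
theorem perturbed_loss_smaller_than_pruned_loss
    (r₁ r₂ zS z₀ η τ a₁s a₂s a₁p a₂p bp : ℝ)
    (hr : r₁ * r₂ ≠ 0) (hz : zS ≠ 0) (hη : 0 < η) (hτ : 0 < τ) (hτη : 4 * τ ≤ η)
    (hs1 : |a₁s| ≤ τ) (hs2 : |a₂s| ≤ τ)
    (hp1 : η / 2 < |a₁p|) (hp1' : |a₁p| ≤ η)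
    (hp2 : η / 2 < |a₂p|) (hp2' : |a₂p| ≤ η)
    (hsign : r₁ * r₂ * a₁p * a₂p * zS < 0)
    (hbp : |bp| ≤ Real.sqrt |r₁ * r₂ * zS| * η / 8)
    (hη2 : 2 * |r₁ * r₂| * η ^ 2 ≤ |zS| / 16)
    (hbig : 16 * (r₁ ^ 2 * η ^ 2 + r₂ ^ 2 * η ^ 2 + |z₀|) ^ 2 ≤ |r₁ * r₂| * η ^ 2 * |zS|) :
    ∀ bs : ℝ,
      (1 / 32) * |r₁ * r₂| * η ^ 2 * |zS|
        ≤ ((1 / 2) * (2 * r₁ * r₂ * a₁s * a₂s + zS) ^ 2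
              + (1 / 2) * (r₁ ^ 2 * a₁s ^ 2 + r₂ ^ 2 * a₂s ^ 2 + bs + z₀) ^ 2)
          - ((1 / 2) * (2 * r₁ * r₂ * a₁p * a₂p + zS) ^ 2
              + (1 / 2) * (r₁ ^ 2 * a₁p ^ 2 + r₂ ^ 2 * a₂p ^ 2 + bp + z₀) ^ 2) :=
  perturbed_loss_smaller_than_pruned_loss_general r₁ r₂ zS z₀ η τ a₁s a₂s a₁p a₂p bp hτη hs1 hs2 hp1
    hp1' hp2 hp2' hsign hbp hη2 hbig
end
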